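/- arXiv:1805.01016 — 2 statements merged into one kernel-verified Lean document; each statement's English description precedes it below -/
import Mathlib

section
/- The space of norms N(V) on a finite dimensional vector space V, equipped with the Goldman–Iwahori metric d(‖·‖,‖·‖') = sup_{v≠0} |log‖v‖ − log‖v‖'|, is a complete metric space, and the subset of ultrametric norms is closed in it. -/
def IsVNorm (K : Type*) [NormedField K] {V : Type*} [AddCommGroup V] [Module K V]
    (f : V → ℝ) : Prop :=
  (∀ v, 0 ≤ f v) ∧ (∀ (a : K) (v : V), f (a • v) = ‖a‖ * f v) ∧
    (∀ v w, f (v + w) ≤ f v + f w) ∧ ∀ v, f v = 0 → v = 0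

/-- A norm is ultrametric if it satisfies the strong triangle inequality. -/
def IsUltra {V : Type*} [AddCommGroup V] (f : V → ℝ) : Prop :=
  ∀ v w, f (v + w) ≤ max (f v) (f w)

/-- The Goldman–Iwahori distance between two norms. -/
noncomputable def dGI {V : Type*} [AddCommGroup V] (f g : V → ℝ) : ℝ :=
  ⨆ v : {v : V // v ≠ 0}, |Real.log (f v) - Real.log (g v)|


section Helpers
variable {K : Type*} [NormedField K] {V : Type*} [AddCommGroup V] [Module K V] {f : V → ℝ}

lemma IsVNorm.map_zero (hf : IsVNorm K f) : f 0 = 0 := by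
  have h := hf.2.1 (0 : K) 0
  simpa using h

lemma IsVNorm.pos (hf : IsVNorm K f) {v : V} (hv : v ≠ 0) : 0 < f v :=
  (hf.1 v).lt_of_ne fun h => hv (hf.2.2.2 v h.symm)

lemma IsVNorm.map_neg (hf : IsVNorm K f) (v : V) : f (-v) = f v := by
  have h := hf.2.1 (-1 : K) v
  simpa using h

lemma IsVNorm.sub_le (hf : IsVNorm K f) (v w : V) : f (v - w) ≤ f v + f w := by
  rw [sub_eq_add_neg]
  calc f (v + -w) ≤ f v + f (-w) := hf.2.2.1 v (-w)
  _ = f v + f w := by rw [hf.map_neg]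

lemma IsVNorm.sum_le {ι : Type*} (hf : IsVNorm K f) (s : Finset ι) (c : ι → K) (u : ι → V) :
    f (∑ i ∈ s, c i • u i) ≤ ∑ i ∈ s, ‖c i‖ * f (u i) := by
  classical
  induction s using Finset.induction with
  | empty => simp [hf.map_zero]
  | insert a s h ih =>
    rw [Finset.sum_insert h, Finset.sum_insert h]
    calc f _ ≤ f (_ • _) + f (∑ i ∈ _, c i • u i) := hf.2.2.1 _ _
    _ ≤ ‖c _‖ * f (u _) + ∑ i ∈ _, ‖c i‖ * f (u i) := by
        rw [hf.2.1]; exact add_le_add le_rfl ih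

end Helpers

section CoordBound
variable {K : Type*} [NormedField K] [CompleteSpace K]

lemma snoc_zero_eq_sum {n : ℕ} (z : Fin n → K) :
    (Fin.snoc z 0 : Fin (n + 1) → K) =
      ∑ i : Fin n, z i • (Fin.snoc (Pi.single i 1) 0 : Fin (n + 1) → K) := by
  classical
  funext j
  refine Fin.lastCases ?_ ?_ j
  · simp [Fin.snoc_last]
  · intro j
    simp only [Fin.snoc_castSucc, Finset.sum_apply, Pi.smul_apply, Fin.snoc_castSucc,
      smul_eq_mul, Pi.single_apply]
    simp [mul_ite]

lemma coord_bound : ∀ (n : ℕ) (f : (Fin n → K) → ℝ), IsVNorm K f →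
    ∃ C > 0, ∀ (x : Fin n → K) (i : Fin n), ‖x i‖ ≤ C * f x := by
  intro n
  induction n with
  | zero => exact fun f _ => ⟨1, one_pos, fun x i => i.elim0⟩
  | succ n ih =>
    intro f hf
    -- the restricted norm on the first n coordinates
    set g : (Fin n → K) → ℝ := fun x => f (Fin.snoc x 0) with hg_def
    have hsnoc_smul : ∀ (a : K) (x : Fin n → K),
        (Fin.snoc (a • x) 0 : Fin (n+1) → K) = a • (Fin.snoc x 0 : Fin (n+1) → K) := by
      intro a x; funext j
      refine Fin.lastCases ?_ ?_ j <;> simp [Fin.snoc_last, Fin.snoc_castSucc]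
    have hsnoc_add : ∀ (x y : Fin n → K),
        (Fin.snoc (x + y) 0 : Fin (n+1) → K) = (Fin.snoc x 0 : Fin (n+1) → K) + (Fin.snoc y 0 : Fin (n+1) → K) := by
      intro x y; funext j
      refine Fin.lastCases ?_ ?_ j <;> simp [Fin.snoc_last, Fin.snoc_castSucc]
    have hg : IsVNorm K g := by
      refine ⟨fun x => hf.1 _, fun a x => ?_, fun x y => ?_, fun x hx => ?_⟩
      · rw [hg_def]; simp only; rw [hsnoc_smul, hf.2.1]
      · rw [hg_def]; simp only; rw [hsnoc_add]; exact hf.2.2.1 _ _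
      · have h0 : (Fin.snoc x 0 : Fin (n+1) → K) = 0 := hf.2.2.2 _ hx
        funext j
        have := congrFun h0 j.castSucc
        simpa [Fin.snoc_castSucc] using this
    obtain ⟨C, hC, hCb⟩ := ih g hg
    -- the key positivity: inf over x of f (snoc x 1) is positive
    have key : ∃ δ > 0, ∀ x : Fin n → K, δ ≤ f (Fin.snoc x 1) := by
      by_contra hcon
      push_neg at hcon
      -- extract a sequence
      have hseq : ∀ k : ℕ, ∃ x : Fin n → K, f (Fin.snoc x 1) < 1 / (k + 1) := by
        intro k
        obtain ⟨x, hx⟩ := hcon (1 / (k + 1)) (by positivity)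
        exact ⟨x, hx⟩
      choose x hx using hseq
      have hdiff : ∀ k j : ℕ, g (x k - x j) ≤ 1 / (k + 1) + 1 / (j + 1) := by
        intro k j
        have heq : (Fin.snoc (x k - x j) 0 : Fin (n+1) → K)
            = (Fin.snoc (x k) 1 : Fin (n+1) → K) - (Fin.snoc (x j) 1 : Fin (n+1) → K) := by
          funext m
          refine Fin.lastCases ?_ ?_ m <;> simp [Fin.snoc_last, Fin.snoc_castSucc]
        calc g (x k - x j) = f (Fin.snoc (x k) 1 - Fin.snoc (x j) 1) := by rw [hg_def]; simp only; rw [heq]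
        _ ≤ f (Fin.snoc (x k) 1) + f (Fin.snoc (x j) 1) := hf.sub_le _ _
        _ ≤ 1 / (k + 1) + 1 / (j + 1) := add_le_add (hx k).le (hx j).le
      have hcauchy : ∀ i : Fin n, CauchySeq (fun k => x k i) := by
        intro i
        refine cauchySeq_of_le_tendsto_0 (s := fun k => x k i) (fun N : ℕ => C * (2 / ((N : ℝ) + 1))) ?_ ?_
        · intro k j N hk hj
          rw [dist_eq_norm]
          have h1 : ‖(x k - x j) i‖ ≤ C * g (x k - x j) := hCb _ i
          have h2 : g (x k - x j) ≤ 2 / (N + 1) := by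
            refine (hdiff k j).trans ?_
            have e1 : (1 : ℝ) / (k + 1) ≤ 1 / (N + 1) := by
              apply one_div_le_one_div_of_le (by positivity)
              exact_mod_cast by omega
            have e2 : (1 : ℝ) / (j + 1) ≤ 1 / (N + 1) := by
              apply one_div_le_one_div_of_le (by positivity)
              exact_mod_cast by omega
            calc (1:ℝ) / (k + 1) + 1 / (j + 1) ≤ 1 / (N + 1) + 1 / (N + 1) := add_le_add e1 e2
            _ = 2 / (N + 1) := by ring
          calc ‖x k i - x j i‖ = ‖(x k - x j) i‖ := by simp
          _ ≤ C * g (x k - x j) := h1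
          _ ≤ C * (2 / (N + 1)) := by nlinarith [hg.1 (x k - x j)]
        · have : Filter.Tendsto (fun N : ℕ => (1:ℝ) / (N + 1)) Filter.atTop (nhds 0) :=
            tendsto_one_div_add_atTop_nhds_zero_nat
          have := (this.const_mul (2 * C))
          simpa [mul_comm, mul_assoc, mul_div_assoc, div_eq_mul_inv, mul_left_comm] using this
      choose y hy using fun i => cauchySeq_tendsto_of_complete (hcauchy i)
      -- f (snoc y 1) = 0, contradiction
      have hbound : ∀ k, f (Fin.snoc y 1) ≤ f (Fin.snoc (x k) 1)
          + ∑ i : Fin n, ‖y i - x k i‖ * f (Fin.snoc (Pi.single i 1) 0) := by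
        intro k
        have heq : (Fin.snoc y 1 : Fin (n+1) → K)
            = (Fin.snoc (x k) 1 : Fin (n+1) → K) + (Fin.snoc (y - x k) 0 : Fin (n+1) → K) := by
          funext m
          refine Fin.lastCases ?_ ?_ m <;> simp [Fin.snoc_last, Fin.snoc_castSucc]
        rw [heq]
        refine (hf.2.2.1 _ _).trans (add_le_add le_rfl ?_)
        calc f (Fin.snoc (y - x k) 0)
            = f (∑ i : Fin n, (y - x k) i • (Fin.snoc (Pi.single i 1) 0 : Fin (n+1) → K)) := by
              rw [snoc_zero_eq_sum]
        _ ≤ ∑ i : Fin n, ‖(y - x k) i‖ * f (Fin.snoc (Pi.single i 1) 0) :=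
              hf.sum_le _ _ _
        _ = ∑ i : Fin n, ‖y i - x k i‖ * f (Fin.snoc (Pi.single i 1) 0) := by simp
      have htend : Filter.Tendsto (fun k => f (Fin.snoc (x k) 1)
          + ∑ i : Fin n, ‖y i - x k i‖ * f (Fin.snoc (Pi.single i 1) 0))
          Filter.atTop (nhds 0) := by
        have h1 : Filter.Tendsto (fun k => f (Fin.snoc (x k) 1)) Filter.atTop (nhds 0) := by
          apply squeeze_zero (fun k => hf.1 _) (fun k => (hx k).le)
          exact tendsto_one_div_add_atTop_nhds_zero_nat
        have h2 : Filter.Tendsto (fun k => ∑ i : Fin n,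
            ‖y i - x k i‖ * f (Fin.snoc (Pi.single i 1) 0)) Filter.atTop (nhds 0) := by
          have : ∀ i : Fin n, Filter.Tendsto
              (fun k => ‖y i - x k i‖ * f (Fin.snoc (Pi.single i 1) 0)) Filter.atTop (nhds 0) := by
            intro i
            have hni : Filter.Tendsto (fun k => ‖y i - x k i‖) Filter.atTop (nhds 0) := by
              have := (hy i)
              rw [tendsto_iff_norm_sub_tendsto_zero] at this
              simpa [norm_sub_rev] using this
            simpa using hni.mul_const (f (Fin.snoc (Pi.single i 1) 0))
          have := tendsto_finset_sum Finset.univ (fun i _ => this i)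
          simpa using this
        simpa using h1.add h2
      have hle0 : f (Fin.snoc y 1) ≤ 0 :=
        ge_of_tendsto htend (Filter.Eventually.of_forall hbound)
      have hzero : f (Fin.snoc y 1) = 0 := le_antisymm hle0 (hf.1 _)
      have := hf.2.2.2 _ hzero
      have h1 := congrFun this (Fin.last n)
      simp [Fin.snoc_last] at h1
    obtain ⟨δ, hδ, hδb⟩ := key
    -- bound for the last coordinate
    have hlast : ∀ y : Fin (n+1) → K, ‖y (Fin.last n)‖ ≤ δ⁻¹ * f y := by
      intro y
      by_cases ha : y (Fin.last n) = 0
      · rw [ha, norm_zero]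
        exact mul_nonneg (inv_nonneg.mpr hδ.le) (hf.1 y)
      · set a := y (Fin.last n) with ha_def
        have hy_eq : y = a • (Fin.snoc (a⁻¹ • Fin.init y) 1 : Fin (n+1) → K) := by
          funext m
          refine Fin.lastCases ?_ ?_ m
          · simp [Fin.snoc_last]; rfl
          · intro m
            simp [Fin.snoc_castSucc, Fin.init, ← mul_assoc, mul_inv_cancel₀ ha]
        have hfy : f y = ‖a‖ * f (Fin.snoc (a⁻¹ • Fin.init y) 1) := by
          conv_lhs => rw [hy_eq]
          exact hf.2.1 _ _
        have hge : ‖a‖ * δ ≤ f y := by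
          rw [hfy]
          exact mul_le_mul_of_nonneg_left (hδb _) (norm_nonneg a)
        have h1 := mul_le_mul_of_nonneg_left hge (inv_nonneg.mpr hδ.le)
        calc ‖a‖ = δ⁻¹ * (‖a‖ * δ) := by field_simp
        _ ≤ δ⁻¹ * f y := h1
    set B := f (Pi.single (Fin.last n) 1) with hB_def
    have hB : 0 ≤ B := hf.1 _
    have hinit : ∀ y : Fin (n+1) → K,
        f (Fin.snoc (Fin.init y) 0) ≤ (1 + δ⁻¹ * B) * f y := by
      intro y
      have heq : (Fin.snoc (Fin.init y) 0 : Fin (n+1) → K)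
          = y - y (Fin.last n) • (Pi.single (Fin.last n) 1 : Fin (n+1) → K) := by
        funext m
        refine Fin.lastCases ?_ ?_ m
        · simp [Fin.snoc_last]
        · intro m
          have hne : m.castSucc ≠ Fin.last n := (Fin.castSucc_lt_last m).ne
          simp [Fin.snoc_castSucc, Fin.init, Pi.single_apply, hne]
      rw [heq]
      have h1 : f (y - y (Fin.last n) • (Pi.single (Fin.last n) 1 : Fin (n+1) → K))
          ≤ f y + ‖y (Fin.last n)‖ * B := by
        refine (hf.sub_le _ _).trans ?_
        rw [hf.2.1]
      have h2 : ‖y (Fin.last n)‖ * B ≤ (δ⁻¹ * f y) * B :=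
        mul_le_mul_of_nonneg_right (hlast y) hB
      nlinarith
    refine ⟨max δ⁻¹ (C * (1 + δ⁻¹ * B)), lt_max_iff.mpr (Or.inl (inv_pos.mpr hδ)), ?_⟩
    intro y i
    refine Fin.lastCases ?_ ?_ i
    · exact (hlast y).trans (mul_le_mul_of_nonneg_right (le_max_left _ _) (hf.1 y))
    · intro j
      have h1 : ‖Fin.init y j‖ ≤ C * g (Fin.init y) := hCb _ j
      have h2 : g (Fin.init y) ≤ (1 + δ⁻¹ * B) * f y := hinit y
      have h3 : ‖y (Fin.castSucc j)‖ = ‖Fin.init y j‖ := by simp [Fin.init]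
      rw [h3]
      calc ‖Fin.init y j‖ ≤ C * ((1 + δ⁻¹ * B) * f y) := by nlinarith
      _ = (C * (1 + δ⁻¹ * B)) * f y := by ring
      _ ≤ max δ⁻¹ (C * (1 + δ⁻¹ * B)) * f y :=
          mul_le_mul_of_nonneg_right (le_max_right _ _) (hf.1 y)

end CoordBound


section Compare
variable {K : Type*} [NormedField K] {V : Type*} [AddCommGroup V] [Module K V] {f g : V → ℝ}
variable [CompleteSpace K] [FiniteDimensional K V]

lemma norm_compare (hf : IsVNorm K f) (hg : IsVNorm K g) :
    ∃ M : ℝ, 1 ≤ M ∧ ∀ v, f v ≤ M * g v := by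
  classical
  set n := Module.finrank K V
  set e := (Module.finBasis K V).equivFun with he
  set F : (Fin n → K) → ℝ := fun x => f (e.symm x) with hF
  set G : (Fin n → K) → ℝ := fun x => g (e.symm x) with hG
  have hFn : IsVNorm K F := by
    refine ⟨fun x => hf.1 _, fun a x => ?_, fun x y => ?_, fun x hx => ?_⟩
    · rw [hF]; simp only [map_smul]; exact hf.2.1 _ _
    · rw [hF]; simp only [map_add]; exact hf.2.2.1 _ _
    · have : e.symm x = 0 := hf.2.2.2 _ hx
      simpa using congrArg e this
  have hGn : IsVNorm K G := by
    refine ⟨fun x => hg.1 _, fun a x => ?_, fun x y => ?_, fun x hx => ?_⟩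
    · rw [hG]; simp only [map_smul]; exact hg.2.1 _ _
    · rw [hG]; simp only [map_add]; exact hg.2.2.1 _ _
    · have : e.symm x = 0 := hg.2.2.2 _ hx
      simpa using congrArg e this
  obtain ⟨C, hC, hCb⟩ := coord_bound n G hGn
  set S : ℝ := ∑ i : Fin n, F (Pi.single i 1) with hS
  refine ⟨max 1 (C * S), le_max_left _ _, fun v => ?_⟩
  have hx : v = e.symm (e v) := (e.symm_apply_apply v).symm
  set x := e v with hxv
  have hdecomp : x = ∑ i : Fin n, x i • (Pi.single i 1 : Fin n → K) := by
    funext j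
    simp [Pi.single_apply, Finset.sum_apply]
  have h1 : f v = F x := congrArg f hx
  have h2 : F x ≤ ∑ i : Fin n, ‖x i‖ * F (Pi.single i 1) := by
    conv_lhs => rw [hdecomp]
    exact hFn.sum_le _ _ _
  have h3 : ∑ i : Fin n, ‖x i‖ * F (Pi.single i 1) ≤ (C * S) * G x := by
    calc ∑ i : Fin n, ‖x i‖ * F (Pi.single i 1)
        ≤ ∑ i : Fin n, (C * G x) * F (Pi.single i 1) := by
          refine Finset.sum_le_sum fun i _ => ?_
          exact mul_le_mul_of_nonneg_right (hCb x i) (hFn.1 _)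
    _ = (C * S) * G x := by rw [← Finset.mul_sum, ← hS]; ring
  have h4 : G x = g v := (congrArg g hx).symm
  calc f v = F x := h1
  _ ≤ ∑ i : Fin n, ‖x i‖ * F (Pi.single i 1) := h2
  _ ≤ (C * S) * G x := h3
  _ = (C * S) * g v := by rw [h4]
  _ ≤ max 1 (C * S) * g v := mul_le_mul_of_nonneg_right (le_max_right _ _) (hg.1 v)

lemma dGI_bddAbove (hf : IsVNorm K f) (hg : IsVNorm K g) :
    BddAbove (Set.range fun v : {v : V // v ≠ 0} => |Real.log (f v) - Real.log (g v)|) := by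
  obtain ⟨M, hM1, hMf⟩ := norm_compare hf hg
  obtain ⟨M', hM'1, hM'g⟩ := norm_compare hg hf
  refine ⟨max (Real.log M) (Real.log M'), ?_⟩
  rintro r ⟨v, rfl⟩
  have hfv := hf.pos v.2
  have hgv := hg.pos v.2
  have hMpos : (0:ℝ) < M := lt_of_lt_of_le one_pos hM1
  have hM'pos : (0:ℝ) < M' := lt_of_lt_of_le one_pos hM'1
  rw [abs_sub_le_iff]
  constructor
  · have : Real.log (f v.1) ≤ Real.log (M * g v.1) := Real.log_le_log hfv (hMf v.1)
    rw [Real.log_mul hMpos.ne' hgv.ne'] at this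
    have h' : Real.log (f v.1) ≤ Real.log M + Real.log (g v.1) := this
    exact (sub_le_iff_le_add.mpr h').trans (le_max_left _ _)
  · have : Real.log (g v.1) ≤ Real.log (M' * f v.1) := Real.log_le_log hgv (hM'g v.1)
    rw [Real.log_mul hM'pos.ne' hfv.ne'] at this
    have h' : Real.log (g v.1) ≤ Real.log M' + Real.log (f v.1) := this
    exact (sub_le_iff_le_add.mpr h').trans (le_max_right _ _)

lemma abs_log_le_dGI (hf : IsVNorm K f) (hg : IsVNorm K g) (v : {v : V // v ≠ 0}) :
    |Real.log (f v) - Real.log (g v)| ≤ dGI f g :=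
  le_ciSup (dGI_bddAbove hf hg) v

lemma dGI_nonneg : 0 ≤ dGI f g :=
  Real.iSup_nonneg fun _ => abs_nonneg _

end Compare

/-- The space of norms `N(V)` with the Goldman–Iwahori metric is complete, and the
subset of ultrametric norms is closed in it. -/
theorem GoldmanIwahori_complete_and_ultrametric_closed
    {K V : Type*} [NormedField K] [CompleteSpace K]
    [AddCommGroup V] [Module K V] [FiniteDimensional K V] :
    (∀ F : ℕ → V → ℝ, (∀ n, IsVNorm K (F n)) →
      (∀ ε : ℝ, 0 < ε → ∃ N : ℕ, ∀ m n : ℕ, N ≤ m → N ≤ n → dGI (F m) (F n) < ε) →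
      ∃ g : V → ℝ, IsVNorm K g ∧
        Filter.Tendsto (fun n => dGI (F n) g) Filter.atTop (nhds 0)) ∧
    (∀ (F : ℕ → V → ℝ) (g : V → ℝ), (∀ n, IsVNorm K (F n) ∧ IsUltra (F n)) →
      IsVNorm K g →
      Filter.Tendsto (fun n => dGI (F n) g) Filter.atTop (nhds 0) →
      IsUltra g) := by
  constructor
  · intro F hF hCauchy
    have hcs : ∀ v : {v : V // v ≠ 0}, CauchySeq (fun n => Real.log (F n v)) := by
      intro v
      rw [Metric.cauchySeq_iff]
      intro ε hε
      obtain ⟨N, hN⟩ := hCauchy ε hε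
      refine ⟨N, fun m hm n hn => ?_⟩
      have h1 : |Real.log (F m v) - Real.log (F n v)| ≤ dGI (F m) (F n) :=
        abs_log_le_dGI (hF m) (hF n) v
      calc dist (Real.log (F m v)) (Real.log (F n v))
          = |Real.log (F m v) - Real.log (F n v)| := Real.dist_eq _ _
      _ ≤ dGI (F m) (F n) := h1
      _ < ε := hN m n hm hn
    choose L hL using fun v => cauchySeq_tendsto_of_complete (hcs v)
    classical
    set g : V → ℝ := fun v => if h : v = 0 then 0 else Real.exp (L ⟨v, h⟩) with hg_def
    have hgpos : ∀ (v : V) (h : v ≠ 0), g v = Real.exp (L ⟨v, h⟩) := fun v h => dif_neg h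
    have hg0 : g 0 = 0 := dif_pos rfl
    have hgnn : ∀ v, 0 ≤ g v := by
      intro v
      by_cases h : v = 0
      · rw [h, hg0]
      · rw [hgpos v h]; exact (Real.exp_pos _).le
    have hpt : ∀ (v : V) (h : v ≠ 0),
        Filter.Tendsto (fun n => F n v) Filter.atTop (nhds (g v)) := by
      intro v h
      rw [hgpos v h]
      have h2 := (Real.continuous_exp.tendsto _).comp (hL ⟨v, h⟩)
      simp only [Function.comp] at h2
      exact h2.congr fun n => Real.exp_log ((hF n).pos h)
    have hgnorm : IsVNorm K g := by
      refine ⟨hgnn, fun a v => ?_, fun v w => ?_, fun v hv0 => ?_⟩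
      · by_cases ha : a = 0
        · rw [ha, zero_smul, hg0, norm_zero, zero_mul]
        by_cases hv : v = 0
        · rw [hv, smul_zero, hg0, mul_zero]
        have hav : a • v ≠ 0 := smul_ne_zero ha hv
        have t1 := hpt _ hav
        have t2 : Filter.Tendsto (fun n => F n (a • v)) Filter.atTop (nhds (‖a‖ * g v)) := by
          have := (hpt v hv).const_mul ‖a‖
          exact this.congr fun n => ((hF n).2.1 a v).symm
        exact tendsto_nhds_unique t1 t2
      · by_cases hvw : v + w = 0
        · rw [hvw, hg0]; exact add_nonneg (hgnn v) (hgnn w)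
        by_cases hv : v = 0
        · rw [hv, zero_add, hg0, zero_add]
        by_cases hw : w = 0
        · rw [hw, add_zero, hg0, add_zero]
        exact le_of_tendsto_of_tendsto' (hpt _ hvw) ((hpt v hv).add (hpt w hw))
          fun n => (hF n).2.2.1 v w
      · by_contra hv
        rw [hgpos v hv] at hv0
        exact Real.exp_ne_zero _ hv0
    refine ⟨g, hgnorm, ?_⟩
    rw [Metric.tendsto_atTop]
    intro ε hε
    obtain ⟨N, hN⟩ := hCauchy (ε / 2) (half_pos hε)
    refine ⟨N, fun n hn => ?_⟩
    have hb : ∀ v : {v : V // v ≠ 0}, |Real.log (F n v) - Real.log (g v)| ≤ ε / 2 := by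
      intro v
      have hlog : Real.log (g v.1) = L v := by
        rw [hgpos v.1 v.2, Real.log_exp]
      rw [hlog]
      have hlim : Filter.Tendsto (fun m => |Real.log (F n v) - Real.log (F m v)|)
          Filter.atTop (nhds |Real.log (F n v) - L v|) :=
        (tendsto_const_nhds.sub (hL v)).abs
      refine le_of_tendsto hlim ?_
      rw [Filter.eventually_atTop]
      refine ⟨N, fun m hm => ?_⟩
      exact (abs_log_le_dGI (hF n) (hF m) v).trans (hN n m hn hm).le
    have hle : dGI (F n) g ≤ ε / 2 := Real.iSup_le hb (half_pos hε).le
    have h0 : (0:ℝ) ≤ dGI (F n) g := dGI_nonneg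
    rw [Real.dist_eq, sub_zero, abs_of_nonneg h0]
    linarith
  · intro F g hF hg hconv v w
    by_cases hvw : v + w = 0
    · rw [hvw, hg.map_zero]
      exact le_max_of_le_left (hg.1 v)
    by_cases hv : v = 0
    · rw [hv, zero_add]; exact le_max_right _ _
    by_cases hw : w = 0
    · rw [hw, add_zero]; exact le_max_left _ _
    have hpt : ∀ (u : V), u ≠ 0 → Filter.Tendsto (fun n => F n u) Filter.atTop (nhds (g u)) := by
      intro u hu
      have h2 : Filter.Tendsto (fun n => Real.log (F n u)) Filter.atTop
          (nhds (Real.log (g u))) := by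
        rw [tendsto_iff_dist_tendsto_zero]
        refine squeeze_zero (fun n => dist_nonneg) (fun n => ?_) hconv
        rw [Real.dist_eq]
        exact abs_log_le_dGI (hF n).1 hg ⟨u, hu⟩
      have h3 := (Real.continuous_exp.tendsto _).comp h2
      simp only [Function.comp_def] at h3
      rw [Real.exp_log (hg.pos hu)] at h3
      exact h3.congr fun n => Real.exp_log ((hF n).1.pos hu)
    exact le_of_tendsto_of_tendsto' (hpt _ hvw) ((hpt v hv).max (hpt w hw))
      fun n => (hF n).2 v w
end

section
/- Over a complete non-Archimedean field, every ultrametric norm on a finite dimensional vector space is a limit (in the Goldman–Iwahori metric) of diagonalizable norms; more precisely, for every ε > 0 there exists a basis (e_i) such that the diagonalizable norm ‖∑ α_i e_i‖' := max_i |α_i|‖e_i‖ satisfies (1−ε)‖·‖' ≤ ‖·‖ ≤ ‖·‖'. -/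
section Aux

open Module Filter Topology

variable {K : Type*} [NormedField K] {V : Type*} [AddCommGroup V] [Module K V]

lemma IsVNorm.zero' {f : V → ℝ} (hf : IsVNorm K f) : f 0 = 0 := by
  have := hf.2.1 (0 : K) 0
  simpa using this

lemma IsVNorm.sub_le_s5 {f : V → ℝ} (hf : IsVNorm K f) (hfu : IsUltra f) (x y : V) :
    f (x - y) ≤ max (f x) (f y) := by
  have hneg : f (-y) = f y := by
    have := hf.2.1 (-1 : K) y
    simpa using this
  have := hfu x (-y)
  rw [hneg] at this
  simpa [sub_eq_add_neg] using this

/-- Ultrametric bound for finite sums. -/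
lemma ultra_sum_le {f : V → ℝ} (hf0 : f 0 = 0) (hfu : IsUltra f) {ι : Type*}
    (s : Finset ι) (g : ι → V) {M : ℝ} (hM : 0 ≤ M) (hg : ∀ i ∈ s, f (g i) ≤ M) :
    f (∑ i ∈ s, g i) ≤ M := by
  classical
  induction s using Finset.induction with
  | empty => simpa [hf0] using hM
  | insert a s' hns ih =>
    rw [Finset.sum_insert hns]
    refine (hfu _ _).trans (max_le (hg a (Finset.mem_insert_self a s')) ?_)
    exact ih fun i hi => hg i (Finset.mem_insert_of_mem hi)

set_option maxHeartbeats 2000000 in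
/-- Key lemma: existence of `α`-orthogonal bases, by induction on the dimension. -/
theorem exists_alpha_orthogonal_basis {K : Type*} [NormedField K] [CompleteSpace K]
    (n : ℕ) : ∀ {V : Type*} [AddCommGroup V] [Module K V] [FiniteDimensional K V],
    Module.finrank K V = n → ∀ f : V → ℝ, IsVNorm K f → IsUltra f →
    ∀ {α : ℝ}, 0 < α → α < 1 →
    ∃ B : Basis (Fin n) K V, ∀ (c : Fin n → K) (i : Fin n),
      α * (‖c i‖ * f (B i)) ≤ f (∑ j, c j • B j) := by
  induction n with
  | zero =>
    intro V _ _ _ hrank f hf hfu α hα0 hα1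
    exact ⟨Module.finBasisOfFinrankEq K V hrank, fun c i => i.elim0⟩
  | succ n IH =>
    intro V _ _ _ hrank f hf hfu α hα0 hα1
    have hf0 : f 0 = 0 := hf.zero'
    set γ := Real.sqrt α with hγdef
    have hγ0 : 0 < γ := Real.sqrt_pos.2 hα0
    have hγ1 : γ < 1 := by
      rw [hγdef, ← Real.sqrt_one]
      exact Real.sqrt_lt_sqrt hα0.le hα1
    have hγγ : γ * γ = α := Real.mul_self_sqrt hα0.le
    set b₀ := Module.finBasisOfFinrankEq K V hrank with hb₀
    set W : Submodule K V := Submodule.span K (Set.range (b₀ ∘ Fin.castSucc)) with hWdef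
    set v := b₀ (Fin.last n) with hvdef
    -- membership in `W` is characterized by the vanishing of the last coordinate
    have hmem : ∀ x ∈ W, b₀.repr x (Fin.last n) = 0 := by
      intro x hx
      induction hx using Submodule.span_induction with
      | mem x hx =>
        obtain ⟨j, rfl⟩ := hx
        simp [b₀.repr_self, Finsupp.single_apply, (Fin.castSucc_lt_last j).ne]
      | zero => simp
      | add x y _ _ ihx ihy => simp [ihx, ihy]
      | smul a x _ ih => simp [ih]
    have hmem2 : ∀ x : V, b₀.repr x (Fin.last n) = 0 → x ∈ W := by
      intro x hx0
      have hx : x = ∑ j : Fin n, b₀.repr x (Fin.castSucc j) • b₀ (Fin.castSucc j) := by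
        conv_lhs => rw [← b₀.sum_repr x]
        rw [Fin.sum_univ_castSucc, hx0]
        simp
      rw [hx]
      exact Submodule.sum_mem _ fun j _ =>
        Submodule.smul_mem _ _ (Submodule.subset_span ⟨j, rfl⟩)
    have hvW : v ∉ W := by
      intro hv
      have := hmem v hv
      rw [hvdef, b₀.repr_self] at this
      simp at this
    -- the restricted norm on `W`
    set fW : W → ℝ := fun x => f ↑x with hfWdef
    have hfW : IsVNorm K fW := by
      refine ⟨fun x => hf.1 _, fun a x => by simpa [hfWdef] using hf.2.1 a (x : V),
        fun x y => by simpa [hfWdef] using hf.2.2.1 (x : V) (y : V), fun x hx => ?_⟩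
      exact Subtype.ext (hf.2.2.2 _ hx)
    have hfWu : IsUltra fW := fun x y => by simpa [hfWdef] using hfu (x : V) (y : V)
    have hWrank : Module.finrank K W = n := by
      have hli0 : LinearIndependent K (b₀ ∘ Fin.castSucc) :=
        b₀.linearIndependent.comp _ (Fin.castSucc_injective n)
      rw [hWdef, finrank_span_eq_card hli0, Fintype.card_fin]
    obtain ⟨bW, hbW⟩ := IH hWrank fW hfW hfWu hγ0 hγ1
    -- coordinatewise lower bound on `W`
    have hco : ∀ (x : W) (i : Fin n), γ * (‖bW.repr x i‖ * fW (bW i)) ≤ fW x := by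
      intro x i
      have := hbW (fun j => bW.repr x j) i
      rwa [bW.sum_repr x] at this
    have hP : ∀ i : Fin n, 0 < fW (bW i) := by
      intro i
      refine (hf.1 _).lt_of_ne' fun h0 => ?_
      have : (bW i : V) = 0 := hf.2.2.2 _ h0
      exact (bW.ne_zero i) (by exact_mod_cast Subtype.ext this)
    -- the distance from `v` to `W` is positive
    set d := ⨅ w : W, f (v - ↑w) with hddef
    have hbdd : BddBelow (Set.range fun w : W => f (v - ↑w)) :=
      ⟨0, by rintro _ ⟨w, rfl⟩; exact hf.1 _⟩
    have hd0 : 0 ≤ d := le_ciInf fun w => hf.1 _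
    have hge : ∀ w : W, d ≤ f (v - ↑w) := fun w => ciInf_le hbdd w
    have hdpos : 0 < d := by
      rcases hd0.lt_or_eq with h | h
      · exact h
      exfalso
      have hseq : ∀ k : ℕ, ∃ w : W, f (v - ↑w) < (1 / 2 : ℝ) ^ k := by
        intro k
        refine exists_lt_of_ciInf_lt ?_
        rw [← hddef, ← h]
        positivity
      choose g hg using hseq
      have hsub : ∀ k m : ℕ, fW (g k - g m) ≤ max ((1 / 2 : ℝ) ^ m) ((1 / 2 : ℝ) ^ k) := by
        intro k m
        have heq : ((g k : V) - (g m : V)) = (v - ↑(g m)) - (v - ↑(g k)) := by abel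
        have : fW (g k - g m) = f ((v - ↑(g m)) - (v - ↑(g k))) := by
          rw [hfWdef]; push_cast; rw [heq]
        rw [this]
        exact (hf.sub_le_s5 hfu _ _).trans (max_le_max (hg m).le (hg k).le)
      have hcauchy : ∀ i : Fin n, ∃ L : K,
          Tendsto (fun k => bW.repr (g k) i) atTop (𝓝 L) := by
        intro i
        apply cauchySeq_tendsto_of_complete
        apply cauchySeq_of_le_tendsto_0 (b := fun N => (1 / 2 : ℝ) ^ N / (γ * fW (bW i)))
        · intro k m N hk hm
          rw [dist_eq_norm]
          have h1 : γ * (‖bW.repr (g k - g m) i‖ * fW (bW i)) ≤ fW (g k - g m) := hco _ i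
          have h2 : fW (g k - g m) ≤ (1 / 2 : ℝ) ^ N :=
            (hsub k m).trans (max_le
              (pow_le_pow_of_le_one (by norm_num) (by norm_num) hm)
              (pow_le_pow_of_le_one (by norm_num) (by norm_num) hk))
          have h3 : γ * (‖bW.repr (g k) i - bW.repr (g m) i‖ * fW (bW i)) ≤ (1 / 2 : ℝ) ^ N := by
            have : bW.repr (g k - g m) i = bW.repr (g k) i - bW.repr (g m) i := by
              simp [map_sub]
            rw [← this]
            exact h1.trans h2
          rw [le_div_iff₀ (mul_pos hγ0 (hP i))]
          nlinarith [norm_nonneg (bW.repr (g k) i - bW.repr (g m) i), hP i]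
        · have h4 : Tendsto (fun N : ℕ => (1 / 2 : ℝ) ^ N) atTop (𝓝 0) :=
            tendsto_pow_atTop_nhds_zero_of_lt_one (by norm_num) (by norm_num)
          simpa using h4.div_const (γ * fW (bW i))
      choose L hL using hcauchy
      set winf : W := ∑ i, L i • bW i with hwinf
      have hle : ∀ ε' : ℝ, 0 < ε' → f (v - ↑winf) ≤ ε' := by
        intro ε' hε'
        have hcoord : ∀ i : Fin n,
            ∀ᶠ k in atTop, ‖bW.repr (g k) i - L i‖ * fW (bW i) < ε' := by
          intro i
          have h1 : Tendsto (fun k => ‖bW.repr (g k) i - L i‖ * fW (bW i)) atTop (𝓝 0) := by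
            have := (tendsto_iff_norm_sub_tendsto_zero.mp (hL i)).mul_const (fW (bW i))
            simpa using this
          exact h1.eventually_lt_const hε'
        have hpow : ∀ᶠ k in atTop, ((1 : ℝ) / 2) ^ k < ε' :=
          (tendsto_pow_atTop_nhds_zero_of_lt_one (by norm_num) (by norm_num)).eventually_lt_const
            hε'
        obtain ⟨k, hk1, hk2⟩ := ((eventually_all.2 hcoord).and hpow).exists
        have hgw : f ((g k : V) - ↑winf) ≤ ε' := by
          have hrepr : (g k : W) - winf = ∑ i, (bW.repr (g k) i - L i) • bW i := by
            conv_lhs => rw [← bW.sum_repr (g k)]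
            rw [hwinf, ← Finset.sum_sub_distrib]
            simp [sub_smul]
          have : f (↑(g k - winf) : V) ≤ ε' := by
            rw [hrepr]
            push_cast
            refine ultra_sum_le hf0 hfu _ _ hε'.le fun i _ => ?_
            rw [hf.2.1]
            exact (hk1 i).le
          simpa using this
        have hsplit : (v - ↑winf : V) = (v - ↑(g k)) + ((g k : V) - ↑winf) := by abel
        rw [hsplit]
        exact (hfu _ _).trans (max_le ((hg k).le.trans hk2.le) hgw)
      have hzero : f (v - ↑winf) = 0 := by
        by_contra hne
        have hpos : 0 < f (v - ↑winf) := (hf.1 _).lt_of_ne' hne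
        linarith [hle (f (v - ↑winf) / 2) (by positivity)]
      have : v = ↑winf := by
        have := hf.2.2.2 _ hzero
        rwa [sub_eq_zero] at this
      exact hvW (this ▸ winf.2)
    -- choose `w` almost realizing the distance
    have hlt : d < d / γ := by
      rw [lt_div_iff₀ hγ0]
      nlinarith
    obtain ⟨w, hw⟩ : ∃ w : W, f (v - ↑w) < d / γ := exists_lt_of_ciInf_lt (hddef ▸ hlt)
    set y := v - ↑w with hydef
    have hyW : y ∉ W := by
      intro hy
      apply hvW
      have : v = y + ↑w := by rw [hydef]; abel
      rw [this]
      exact W.add_mem hy w.2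
    have hyd : ∀ x : W, d ≤ f (y + ↑x) := by
      intro x
      have : y + ↑x = v - ↑(w - x) := by rw [hydef]; push_cast; abel
      rw [this]
      exact hge _
    have hydle : f y ≤ d / γ := hw.le
    -- extend the basis
    have hli : ∀ (c : K), ∀ x ∈ W, c • y + x = 0 → c = 0 := by
      intro c x hx hcx
      by_contra hc
      apply hyW
      have h1 : c • y = -x := eq_neg_of_add_eq_zero_left hcx
      have h2 : y = c⁻¹ • (-x) := by
        calc y = c⁻¹ • (c • y) := by rw [smul_smul, inv_mul_cancel₀ hc, one_smul]
        _ = c⁻¹ • (-x) := by rw [h1]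
      rw [h2]
      exact W.smul_mem _ (W.neg_mem hx)
    have hsp : ∀ z : V, ∃ c : K, z + c • y ∈ W := by
      intro z
      refine ⟨-(b₀.repr z (Fin.last n)), ?_⟩
      have h1 : z + (-(b₀.repr z (Fin.last n))) • y =
          (z - b₀.repr z (Fin.last n) • v) + b₀.repr z (Fin.last n) • (↑w : V) := by
        rw [hydef]; module
      rw [h1]
      refine W.add_mem (hmem2 _ ?_) (W.smul_mem _ w.2)
      rw [map_sub, map_smul]
      simp [hvdef, b₀.repr_self, Finsupp.single_apply]
    set B := Basis.mkFinCons y bW hli hsp with hBdef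
    have hBcoe : (B : Fin (n + 1) → V) = Fin.cons y ((↑) ∘ bW) := Basis.coe_mkFinCons y bW hli hsp
    have hB0 : B 0 = y := by rw [hBcoe]; rfl
    have hBsucc : ∀ j : Fin n, B j.succ = ↑(bW j) := by
      intro j; rw [hBcoe]; rfl
    refine ⟨B, ?_⟩
    intro c i
    set X : W := ∑ j, c j.succ • bW j with hXdef
    have hsum : ∑ j, c j • B j = c 0 • y + ↑X := by
      rw [Fin.sum_univ_succ, hB0]
      congr 1
      rw [hXdef]
      push_cast
      exact Finset.sum_congr rfl fun j _ => by rw [hBsucc]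
    set u := c 0 • y + (↑X : V) with hudef
    -- first key estimate
    have hkey1 : γ * (‖c 0‖ * f y) ≤ f u := by
      rcases eq_or_ne (c 0) 0 with h | h
      · simp only [h, norm_zero, zero_mul, mul_zero]
        exact hf.1 _
      · have h1 : f u = ‖c 0‖ * f (y + ↑((c 0)⁻¹ • X)) := by
          rw [← hf.2.1]
          congr 1
          rw [hudef]
          have hc : (↑((c 0)⁻¹ • X) : V) = (c 0)⁻¹ • (↑X : V) := by push_cast; rfl
          rw [hc, smul_add, smul_smul, mul_inv_cancel₀ h, one_smul]
        have h2 : d ≤ f (y + ↑((c 0)⁻¹ • X)) := hyd _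
        rw [h1]
        calc γ * (‖c 0‖ * f y) ≤ γ * (‖c 0‖ * (d / γ)) := by
              gcongr
        _ = ‖c 0‖ * d := by field_simp
        _ ≤ ‖c 0‖ * f (y + ↑((c 0)⁻¹ • X)) :=
            mul_le_mul_of_nonneg_left h2 (norm_nonneg _)
    have hfu_nonneg : 0 ≤ f u := hf.1 _
    -- second key estimate : `f ↑X ≤ f u / γ`
    have hXle : f (↑X : V) ≤ f u / γ := by
      have h4 : (↑X : V) = u - c 0 • y := by rw [hudef]; abel
      have h5 : f (↑X : V) ≤ max (f u) (f (c 0 • y)) := by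
        rw [h4]; exact hf.sub_le_s5 hfu _ _
      have h6 : f (c 0 • y) ≤ f u / γ := by
        rw [le_div_iff₀ hγ0, hf.2.1]
        linarith [hkey1]
      have h7 : f u ≤ f u / γ := by
        rw [le_div_iff₀ hγ0]
        calc f u * γ ≤ f u * 1 := mul_le_mul_of_nonneg_left hγ1.le hfu_nonneg
        _ = f u := mul_one _
      exact h5.trans (max_le h7 h6)
    have hfWX : fW X = f (↑X : V) := rfl
    have hfWb : ∀ j : Fin n, fW (bW j) = f (↑(bW j) : V) := fun j => rfl
    rw [hsum]
    -- conclude, by cases on the index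
    induction i using Fin.cases with
    | zero =>
      rw [hB0]
      have hαγ : α ≤ γ := by nlinarith
      calc α * (‖c 0‖ * f y) ≤ γ * (‖c 0‖ * f y) := by
            have h8 : 0 ≤ ‖c 0‖ * f y := mul_nonneg (norm_nonneg _) (hf.1 _)
            nlinarith
      _ ≤ f u := hkey1
    | succ j =>
      rw [hBsucc j]
      have h9 : γ * (‖c j.succ‖ * fW (bW j)) ≤ fW X := hbW (fun j => c j.succ) j
      rw [hfWX, hfWb j] at h9
      have h10 : f (↑X : V) ≤ f u / γ := hXle
      have h11 : γ * (‖c j.succ‖ * f (↑(bW j) : V)) ≤ f u / γ := le_trans h9 h10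
      rw [← hγγ]
      rw [div_eq_mul_inv] at h11
      have h12 := mul_le_mul_of_nonneg_left h11 hγ0.le
      calc γ * γ * (‖c j.succ‖ * f (↑(bW j) : V))
          = γ * (γ * (‖c j.succ‖ * f (↑(bW j) : V))) := by ring
      _ ≤ γ * (f u * γ⁻¹) := h12
      _ = f u := by field_simp
end Aux

/-- Density of diagonalizable norms: every ultrametric norm is approximated by the
diagonalizable norm `v ↦ max_i ‖(B.repr v) i‖ * f (B i)` of a suitable basis `B`, with
multiplicative error `1 - ε`. -/
theorem ultrametric_norm_approx_by_diagonalizable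
    {K V : Type*} [NormedField K] [CompleteSpace K]
    [AddCommGroup V] [Module K V] [FiniteDimensional K V] {N : ℕ}
    (hdim : Module.finrank K V = N)
    (hna : IsNonarchimedean (fun x : K => ‖x‖))
    (f : V → ℝ) (hf : IsVNorm K f) (hfu : IsUltra f) :
    ∀ ε : ℝ, 0 < ε → ∃ B : Module.Basis (Fin N) K V, ∀ v : V,
      (1 - ε) * (⨆ i : Fin N, ‖B.repr v i‖ * f (B i)) ≤ f v ∧
        f v ≤ ⨆ i : Fin N, ‖B.repr v i‖ * f (B i) := by
  intro ε hε
  set α : ℝ := max (1 - ε) (1 / 2) with hα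
  have hα0 : 0 < α := lt_of_lt_of_le (by norm_num) (le_max_right _ _)
  have hα1 : α < 1 := max_lt (by linarith) (by norm_num)
  obtain ⟨B, hB⟩ := exists_alpha_orthogonal_basis N hdim f hf hfu hα0 hα1
  refine ⟨B, fun v => ?_⟩
  have hrepr : ∑ j, B.repr v j • B j = v := B.sum_repr v
  have hterm : ∀ i, 0 ≤ ‖B.repr v i‖ * f (B i) :=
    fun i => mul_nonneg (norm_nonneg _) (hf.1 _)
  have hsup_nonneg : 0 ≤ ⨆ i : Fin N, ‖B.repr v i‖ * f (B i) := Real.iSup_nonneg hterm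
  constructor
  · rcases Nat.eq_zero_or_pos N with h | h
    · subst h
      rw [Real.iSup_of_isEmpty]
      simpa using hf.1 v
    · haveI : Nonempty (Fin N) := ⟨⟨0, h⟩⟩
      have hle : (⨆ i : Fin N, ‖B.repr v i‖ * f (B i)) ≤ f v / α := by
        refine ciSup_le fun i => ?_
        rw [le_div_iff₀ hα0]
        have := hB (B.repr v) i
        rw [hrepr] at this
        nlinarith [hterm i]
      calc (1 - ε) * (⨆ i : Fin N, ‖B.repr v i‖ * f (B i))
          ≤ α * (⨆ i : Fin N, ‖B.repr v i‖ * f (B i)) :=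
            mul_le_mul_of_nonneg_right (le_max_left _ _) hsup_nonneg
      _ ≤ α * (f v / α) := mul_le_mul_of_nonneg_left hle hα0.le
      _ = f v := by field_simp
  · conv_lhs => rw [← hrepr]
    refine ultra_sum_le hf.zero' hfu _ _ hsup_nonneg fun i _ => ?_
    rw [hf.2.1]
    exact le_ciSup (f := fun i : Fin N => ‖B.repr v i‖ * f (B i))
      (Set.Finite.bddAbove (Set.finite_range _)) i
end
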